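/- arXiv:2306.11059 — 5 statements merged into one kernel-verified Lean document; each statement's English description precedes it below -/
import Mathlib

section
/- Let d = (2, √3) and P = (x, α√3) with 0 < x < 1/2 and (1+x)/3 < α < 1 - x, and let U₀ = (2 - x, √3(1 + x(2-x)/(3(1-α)))). Then (P - d) · (U₀ - d) = 0. -/
open RealInnerProductSpace

theorem EuclideanSpace.vec_two_sub_vec_two (a b c e : ℝ) :
    !₂[a, b] - !₂[c, e] = !₂[a - c, b - e] := by
  simp only [← WithLp.toLp_sub, Matrix.cons_sub_cons, Matrix.empty_sub_empty]

theorem EuclideanSpace.inner_vec_two (a b c e : ℝ) :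
    ⟪!₂[a, b], !₂[c, e]⟫ = a * c + b * e := by
  simp [EuclideanSpace.inner_eq_star_dotProduct, dotProduct, Fin.sum_univ_two, mul_comm]

theorem stmt_3_general (x α : ℝ) (hx0 : 0 < x)
    (hα1 : α < 1 - x) :
    let d : EuclideanSpace ℝ (Fin 2) := !₂[2, Real.sqrt 3]
    let P : EuclideanSpace ℝ (Fin 2) := !₂[x, α * Real.sqrt 3]
    let U₀ : EuclideanSpace ℝ (Fin 2) := !₂[2 - x, Real.sqrt 3 * (1 + x * (2 - x) / (3 * (1 - α)))]
    ⟪P - d, U₀ - d⟫ = 0 := by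
  intro d P U₀
  have hα : 1 - α ≠ 0 := by linarith
  have h3 : Real.sqrt 3 * Real.sqrt 3 = 3 := Real.mul_self_sqrt (by norm_num)
  simp only [d, P, U₀, EuclideanSpace.vec_two_sub_vec_two, EuclideanSpace.inner_vec_two]
  field_simp
  linear_combination (α - 1) * x * (2 - x) * h3

theorem stmt_3 (x α : ℝ) (hx0 : 0 < x) (hx : x < 1/2)
    (hα0 : (1 + x)/3 < α) (hα1 : α < 1 - x) :
    let d : EuclideanSpace ℝ (Fin 2) := !₂[2, Real.sqrt 3]
    let P : EuclideanSpace ℝ (Fin 2) := !₂[x, α * Real.sqrt 3]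
    let U₀ : EuclideanSpace ℝ (Fin 2) := !₂[2 - x, Real.sqrt 3 * (1 + x * (2 - x) / (3 * (1 - α)))]
    ⟪P - d, U₀ - d⟫ = 0 :=
  stmt_3_general x α hx0 hα1
end

section
/- Let P = (x, α√3) with 0 < x < 1/2 and (1+x)/3 < α < 1 - x. Then the three points U₀ = (2 - x, √3(1 + x(2-x)/(3(1-α)))), U₊ = (2 + x, √3(1 - x(2-x)/(3(1-α)))), and U₋ = (-2 + x, √3(1 - x(2-x)/(3(1-α)))) are all at the same Euclidean distance from P. -/
/-!
The horizontal offsets from `P` are `2 - 2x` to `U₀` and `∓2` to `U±`, while the vertical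
offsets are `√3 (a + c)` and `√3 (a - c)` with `a = 1 - α` and `c = x (2 - x) / (3a)`.
The excess `4 - (2 - 2x)² = 4x(2 - x) = 12ac` of the horizontal terms is exactly
`3(a + c)² - 3(a - c)²`.
-/

lemma dist_toLp_two_fin_two (a b c d : ℝ) :
    dist !₂[a, b] !₂[c, d] = √((a - c) ^ 2 + (b - d) ^ 2) := by
  simp [EuclideanSpace.dist_eq, Fin.sum_univ_two, Real.dist_eq, sq_abs]

lemma sq_add_three_mul_sq_eq_of_three_mul_mul_eq {x a c : ℝ} (h : 3 * a * c = x * (2 - x)) :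
    (2 - 2 * x) ^ 2 + 3 * (a + c) ^ 2 = 2 ^ 2 + 3 * (a - c) ^ 2 := by
  linear_combination 4 * h

theorem stmt_8_general (x α : ℝ) (hx0 : 0 < x)
    (hα1 : α < 1 - x) :
    let P : EuclideanSpace ℝ (Fin 2) := !₂[x, α * Real.sqrt 3]
    let U₀ : EuclideanSpace ℝ (Fin 2) := !₂[2 - x, Real.sqrt 3 * (1 + x * (2 - x) / (3 * (1 - α)))]
    let Uplus : EuclideanSpace ℝ (Fin 2) := !₂[2 + x, Real.sqrt 3 * (1 - x * (2 - x) / (3 * (1 - α)))]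
    let Uminus : EuclideanSpace ℝ (Fin 2) := !₂[-2 + x, Real.sqrt 3 * (1 - x * (2 - x) / (3 * (1 - α)))]
    dist P U₀ = dist P Uplus ∧ dist P U₀ = dist P Uminus := by
  intro P U₀ Uplus Uminus
  set c := x * (2 - x) / (3 * (1 - α))
  have hc : 3 * (1 - α) * c = x * (2 - x) := mul_div_cancel₀ _ (by linarith)
  have hsqrt : √3 ^ 2 = 3 := Real.sq_sqrt (by norm_num)
  have key := sq_add_three_mul_sq_eq_of_three_mul_mul_eq hc
  simp only [P, U₀, Uplus, Uminus, dist_toLp_two_fin_two]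
  constructor <;> congr 1 <;> linear_combination key + ((1 - α + c) ^ 2 - (1 - α - c) ^ 2) * hsqrt

theorem stmt_8 (x α : ℝ) (hx0 : 0 < x) (hx : x < 1/2)
    (hα0 : (1 + x)/3 < α) (hα1 : α < 1 - x) :
    let P : EuclideanSpace ℝ (Fin 2) := !₂[x, α * Real.sqrt 3]
    let U₀ : EuclideanSpace ℝ (Fin 2) := !₂[2 - x, Real.sqrt 3 * (1 + x * (2 - x) / (3 * (1 - α)))]
    let Uplus : EuclideanSpace ℝ (Fin 2) := !₂[2 + x, Real.sqrt 3 * (1 - x * (2 - x) / (3 * (1 - α)))]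
    let Uminus : EuclideanSpace ℝ (Fin 2) := !₂[-2 + x, Real.sqrt 3 * (1 - x * (2 - x) / (3 * (1 - α)))]
    dist P U₀ = dist P Uplus ∧ dist P U₀ = dist P Uminus :=
  stmt_8_general x α hx0 hα1
end

section
/- Let 0 < x < 1/2 and (1+x)/3 < α < 1 - x, and set U₊ = (2 + x, √3(1 - x(2-x)/(3(1-α)))) and L₊ = (2 + x, √3(1-x²)/(3α)). Then the y-coordinate of L₊ is strictly less than the y-coordinate of U₊; that is, (1-x²)/(3α) < 1 - x(2-x)/(3(1-α)). -/
open RealInnerProductSpace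

theorem stmt_10 (x α : ℝ) (hx0 : 0 < x) (hx : x < 1/2)
    (hα0 : (1 + x)/3 < α) (hα1 : α < 1 - x) :
    (1 - x^2) / (3 * α) < 1 - x * (2 - x) / (3 * (1 - α)) := by
  have h1 : 0 < 3 * α := by linarith
  have h2 : 0 < 3 * (1 - α) := by linarith
  have key : 0 < 3 * (α - (1 + x)/3) * ((1 - x) - α) :=
    mul_pos (by linarith) (by linarith)
  rw [div_lt_iff₀ h1]
  nlinarith [mul_pos h1 h2, key, div_mul_cancel₀ (x*(2-x)) (ne_of_gt h2)]
end

section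
/- Let 0 < x < 1/2 and (1+x)/3 < α < 1 - x, and define the hexagon with vertices, in order, U₀ = (2 - x, √3(1 + x(2-x)/(3(1-α)))), U₊ = (2 + x, √3(1 - x(2-x)/(3(1-α)))), L₊ = (2 + x, √3(1-x²)/(3α)), L₀ = (-x, √3(x²-1)/(3α)), L₋ = (-2 + x, √3(1-x²)/(3α)), U₋ = (-2 + x, √3(1 - x(2-x)/(3(1-α)))). Then the area of this hexagon (computed by the shoelace formula) equals 4√3. -/
open RealInnerProductSpace

theorem stmt_17 (x α : ℝ) (hx0 : 0 < x) (hx : x < 1/2)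
    (hα0 : (1 + x)/3 < α) (hα1 : α < 1 - x) :
    (1/2) * |((2 - x) * (Real.sqrt 3 * (1 - x * (2 - x) / (3 * (1 - α)))) - (2 + x) * (Real.sqrt 3 * (1 + x * (2 - x) / (3 * (1 - α))))) +
        ((2 + x) * (Real.sqrt 3 * ((1 - x^2) / (3 * α))) - (2 + x) * (Real.sqrt 3 * (1 - x * (2 - x) / (3 * (1 - α))))) +
        ((2 + x) * (Real.sqrt 3 * ((x^2 - 1) / (3 * α))) - (-x) * (Real.sqrt 3 * ((1 - x^2) / (3 * α)))) +
        ((-x) * (Real.sqrt 3 * ((1 - x^2) / (3 * α))) - (-2 + x) * (Real.sqrt 3 * ((x^2 - 1) / (3 * α)))) +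
        ((-2 + x) * (Real.sqrt 3 * (1 - x * (2 - x) / (3 * (1 - α)))) - (-2 + x) * (Real.sqrt 3 * ((1 - x^2) / (3 * α)))) +
        ((-2 + x) * (Real.sqrt 3 * (1 + x * (2 - x) / (3 * (1 - α)))) - (2 - x) * (Real.sqrt 3 * (1 - x * (2 - x) / (3 * (1 - α)))))| = 4 * Real.sqrt 3 := by
  have ha : α ≠ 0 := by nlinarith
  have h1a : (1 : ℝ) - α ≠ 0 := by nlinarith
  have key : ((2 - x) * (Real.sqrt 3 * (1 - x * (2 - x) / (3 * (1 - α)))) - (2 + x) * (Real.sqrt 3 * (1 + x * (2 - x) / (3 * (1 - α))))) +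
        ((2 + x) * (Real.sqrt 3 * ((1 - x^2) / (3 * α))) - (2 + x) * (Real.sqrt 3 * (1 - x * (2 - x) / (3 * (1 - α))))) +
        ((2 + x) * (Real.sqrt 3 * ((x^2 - 1) / (3 * α))) - (-x) * (Real.sqrt 3 * ((1 - x^2) / (3 * α)))) +
        ((-x) * (Real.sqrt 3 * ((1 - x^2) / (3 * α))) - (-2 + x) * (Real.sqrt 3 * ((x^2 - 1) / (3 * α)))) +
        ((-2 + x) * (Real.sqrt 3 * (1 - x * (2 - x) / (3 * (1 - α)))) - (-2 + x) * (Real.sqrt 3 * ((1 - x^2) / (3 * α)))) +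
        ((-2 + x) * (Real.sqrt 3 * (1 + x * (2 - x) / (3 * (1 - α)))) - (2 - x) * (Real.sqrt 3 * (1 - x * (2 - x) / (3 * (1 - α)))))
        = -(8 * Real.sqrt 3) := by
    field_simp
    ring
  rw [key, abs_neg, abs_of_nonneg (by positivity)]
  ring
end

section
/- Let 0 < x < 1/2 and (1+x)/3 < α < 1 - x, with P = (x, α√3), a = (0,√3), U₀ = (2 - x, √3(1 + x(2-x)/(3(1-α)))), and U₋ = (-2 + x, √3(1 - x(2-x)/(3(1-α)))). Then the line through P and a is the perpendicular bisector of the segment U₀U₋; i.e., (P - a) · (U₀ - U₋) = 0 and dist(a, U₀) = dist(a, U₋). -/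
/-! `U₋` is the point reflection of `U₀` through `a`, so `a` is the midpoint of `U₀U₋` and the
line `Pa` is its perpendicular bisector as soon as `P - a ⟂ U₀ - a`, which is a direct
computation. -/

open RealInnerProductSpace

theorem inner_sub_pointReflection {V : Type*} [NormedAddCommGroup V] [InnerProductSpace ℝ V]
    (p a u : V) : ⟪p - a, u - Equiv.pointReflection a u⟫ = 2 * ⟪p - a, u - a⟫ := by
  rw [Equiv.pointReflection_apply, vsub_eq_sub, vadd_eq_add, ← real_inner_smul_right]
  congr 1
  module

namespace EuclideanSpace

theorem vec₂_sub (p q u v : ℝ) : !₂[p, q] - !₂[u, v] = !₂[p - u, q - v] := by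
  ext i; fin_cases i <;> simp

theorem inner_vec₂ (p q u v : ℝ) : ⟪!₂[p, q], !₂[u, v]⟫ = p * u + q * v := by
  simp [PiLp.inner_apply, Fin.sum_univ_two, mul_comm]

end EuclideanSpace

theorem stmt_19_general (x α : ℝ) (hx0 : 0 < x)
    (hα1 : α < 1 - x) :
    let P : EuclideanSpace ℝ (Fin 2) := !₂[x, α * Real.sqrt 3]
    let a : EuclideanSpace ℝ (Fin 2) := !₂[0, Real.sqrt 3]
    let U₀ : EuclideanSpace ℝ (Fin 2) := !₂[2 - x, Real.sqrt 3 * (1 + x * (2 - x) / (3 * (1 - α)))]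
    let Uminus : EuclideanSpace ℝ (Fin 2) := !₂[-2 + x, Real.sqrt 3 * (1 - x * (2 - x) / (3 * (1 - α)))]
    ⟪P - a, U₀ - Uminus⟫ = 0 ∧ dist a U₀ = dist a Uminus := by
  intro P a U₀ Uminus
  have hα : 1 - α ≠ 0 := by linarith
  have hUminus : Uminus = Equiv.pointReflection a U₀ := by
    ext i; fin_cases i <;> simp [Uminus, a, U₀, Equiv.pointReflection_apply] <;> ring
  have hperp : ⟪P - a, U₀ - a⟫ = 0 := by
    have h3 : Real.sqrt 3 * Real.sqrt 3 = 3 := Real.mul_self_sqrt (by norm_num)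
    rw [EuclideanSpace.vec₂_sub, EuclideanSpace.vec₂_sub, EuclideanSpace.inner_vec₂]
    field_simp
    linear_combination (α - 1) * x * (2 - x) * h3
  rw [hUminus, inner_sub_pointReflection, hperp, dist_left_pointReflection]
  exact ⟨mul_zero 2, rfl⟩

theorem stmt_19 (x α : ℝ) (hx0 : 0 < x) (hx : x < 1/2)
    (hα0 : (1 + x)/3 < α) (hα1 : α < 1 - x) :
    let P : EuclideanSpace ℝ (Fin 2) := !₂[x, α * Real.sqrt 3]
    let a : EuclideanSpace ℝ (Fin 2) := !₂[0, Real.sqrt 3]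
    let U₀ : EuclideanSpace ℝ (Fin 2) := !₂[2 - x, Real.sqrt 3 * (1 + x * (2 - x) / (3 * (1 - α)))]
    let Uminus : EuclideanSpace ℝ (Fin 2) := !₂[-2 + x, Real.sqrt 3 * (1 - x * (2 - x) / (3 * (1 - α)))]
    ⟪P - a, U₀ - Uminus⟫ = 0 ∧ dist a U₀ = dist a Uminus :=
  stmt_19_general x α hx0 hα1
end
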